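/- arXiv:math/0012053 — 2 statements merged into one kernel-verified Lean document; each statement's English description precedes it below -/
import Mathlib

section
/- For all real s, t and all real τ ≥ 4, one has ϑ₂(πt, iτ)/ϑ₃(πs, iτ) < 0.09, where ϑ₂(z, iτ) = Σ_{n∈ℤ} e^{-πτ(n+1/2)²} e^{2iz(n+1/2)} and ϑ₃(z, iτ) = Σ_{n∈ℤ} e^{-πτn²} e^{2inz} (both real-valued for real z). -/
/-- Real-valued theta function ϑ₃(z, iτ) = Σ_{n∈ℤ} e^{-πτn²} cos(2nz). -/
noncomputable def theta3R (z τ : ℝ) : ℝ :=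
  ∑' n : ℤ, Real.exp (-Real.pi * τ * (n : ℝ) ^ 2) * Real.cos (2 * (n : ℝ) * z)

/-- Real-valued theta function ϑ₂(z, iτ) = Σ_{n∈ℤ} e^{-πτ(n+1/2)²} cos(2z(n+1/2)). -/
noncomputable def theta2R (z τ : ℝ) : ℝ :=
  ∑' n : ℤ, Real.exp (-Real.pi * τ * ((n : ℝ) + 1 / 2) ^ 2) * Real.cos (2 * z * ((n : ℝ) + 1 / 2))

/-!
With `q = e^{-πτ/4}` the terms of ϑ₂ and ϑ₃ are bounded in absolute value by `q^{|2n+1|}` and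
`q^{4|n|}` (as `k² ≥ |k|` for integers), so summing geometric series,
`|ϑ₂| ≤ 2q/(1-q²)` and `ϑ₃ ≥ 1 - (sum of the bounds for n ≠ 0) = 2 - (1+q⁴)/(1-q⁴)`.
For `τ ≥ 4` we have `q ≤ e^{-π} < 0.044`, which gives `ϑ₂ ≤ 0.0885` and `ϑ₃ ≥ 0.99`.
-/

open Real

lemma exp_neg_pi_lt : exp (-π) < 0.044 := by
  have h : (22.73 : ℝ) < exp π :=
    calc (22.73 : ℝ) < ∑ i ∈ Finset.range 10, (3.14 : ℝ) ^ i / i.factorial := by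
          norm_num [Finset.sum_range_succ, Nat.factorial]
      _ ≤ exp 3.14 := sum_le_exp_of_nonneg (by norm_num) 10
      _ < exp π := exp_lt_exp.mpr pi_gt_d2
  rw [exp_neg, inv_lt_comm₀ (exp_pos _) (by norm_num)]
  linarith

lemma hasSum_pow_natAbs {r : ℝ} (h0 : 0 ≤ r) (h1 : r < 1) :
    HasSum (fun n : ℤ => r ^ n.natAbs) ((1 + r) / (1 - r)) := by
  have hgeo := hasSum_geometric_of_lt_one h0 h1
  convert HasSum.of_nat_of_neg_add_one (f := fun n : ℤ => r ^ n.natAbs)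
    (hgeo.congr_fun fun n => by simp) ((hgeo.mul_left r).congr_fun fun n => ?_) using 1
  · field_simp [(sub_pos.mpr h1).ne']
  · rw [show (-((n : ℤ) + 1)).natAbs = n + 1 by omega, pow_succ']

lemma hasSum_pow_natAbs_two_mul_add_one {r : ℝ} (h0 : 0 ≤ r) (h1 : r < 1) :
    HasSum (fun n : ℤ => r ^ (2 * n + 1).natAbs) (2 * r / (1 - r ^ 2)) := by
  have hgeo := (hasSum_geometric_of_lt_one (sq_nonneg r) (by nlinarith)).mul_left r
  convert HasSum.of_nat_of_neg_add_one (f := fun n : ℤ => r ^ (2 * n + 1).natAbs)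
    (hgeo.congr_fun fun n => ?_) (hgeo.congr_fun fun n => ?_) using 1
  · field_simp [(sub_pos.mpr (by nlinarith : r ^ 2 < 1)).ne']
    ring
  · rw [show (2 * (n : ℤ) + 1).natAbs = 2 * n + 1 by omega]
    ring
  · rw [show (2 * -((n : ℤ) + 1) + 1).natAbs = 2 * n + 1 by omega]
    ring

lemma add_le_tsum_add_tsum_of_abs_le {ι : Type*} {f g : ι → ℝ} (hg : Summable g)
    (hfg : ∀ i, |f i| ≤ g i) (i : ι) : f i + g i ≤ ∑' j, f j + ∑' j, g j := by
  have hf : Summable f := hg.of_norm_bounded hfg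
  rw [← hf.tsum_add hg]
  exact (hf.add hg).le_tsum i fun j _ => by linarith [neg_abs_le (f j), hfg j]

lemma exp_neg_mul_sq_le_pow_natAbs {a : ℝ} (ha : 0 ≤ a) (k : ℤ) :
    exp (-a * k ^ 2) ≤ exp (-a) ^ k.natAbs := by
  have hk : (k.natAbs : ℝ) ≤ (k : ℝ) ^ 2 := by
    rw [← Int.cast_natCast]
    exact_mod_cast Int.natAbs_le_self_sq k
  rw [← exp_nat_mul, exp_le_exp]
  nlinarith

lemma abs_exp_mul_cos_le (x y : ℝ) : |exp x * cos y| ≤ exp x := by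
  rw [abs_mul, abs_exp]
  exact mul_le_of_le_one_right (exp_pos x).le (abs_cos_le_one y)

lemma abs_theta2R_le (z : ℝ) {τ : ℝ} (hτ : 0 < τ) :
    |theta2R z τ| ≤ 2 * exp (-π * τ / 4) / (1 - exp (-π * τ / 4) ^ 2) := by
  have hq : exp (-π * τ / 4) < 1 := exp_lt_one_iff.mpr (by nlinarith [pi_pos])
  rw [theta2R, ← Real.norm_eq_abs]
  refine tsum_of_norm_bounded
    (hasSum_pow_natAbs_two_mul_add_one (exp_pos _).le hq) fun n => ?_
  calc _ ≤ exp (-π * τ * ((n : ℝ) + 1 / 2) ^ 2) := abs_exp_mul_cos_le _ _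
    _ = exp (-(π * τ / 4) * ((2 * n + 1 : ℤ) : ℝ) ^ 2) := by push_cast; ring_nf
    _ ≤ exp (-(π * τ / 4)) ^ (2 * n + 1).natAbs :=
      exp_neg_mul_sq_le_pow_natAbs (by positivity) _
    _ = exp (-π * τ / 4) ^ (2 * n + 1).natAbs := by ring_nf

lemma two_sub_le_theta3R (z : ℝ) {τ : ℝ} (hτ : 0 < τ) :
    2 - (1 + exp (-π * τ / 4) ^ 4) / (1 - exp (-π * τ / 4) ^ 4) ≤ theta3R z τ := by
  have hq4 : exp (-π * τ / 4) ^ 4 = exp (-(π * τ)) := by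
    rw [← exp_nat_mul]
    ring_nf
  have hsum := hasSum_pow_natAbs (pow_nonneg (exp_pos (-π * τ / 4)).le 4)
    (hq4 ▸ exp_lt_one_iff.mpr (by nlinarith [pi_pos]))
  have hterm : ∀ n : ℤ, |exp (-π * τ * (n : ℝ) ^ 2) * cos (2 * n * z)| ≤
      (exp (-π * τ / 4) ^ 4) ^ n.natAbs := fun n => by
    refine (abs_exp_mul_cos_le _ _).trans ?_
    rw [hq4, neg_mul]
    exact exp_neg_mul_sq_le_pow_natAbs (by positivity) n
  have h := add_le_tsum_add_tsum_of_abs_le hsum.summable hterm 0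
  rw [hsum.tsum_eq] at h
  simp only [Int.cast_zero, Int.natAbs_zero, pow_zero, zero_pow two_ne_zero, mul_zero, zero_mul,
    exp_zero, cos_zero, mul_one] at h
  rw [theta3R]
  linarith

theorem theta2_div_theta3_small (s t τ : ℝ) (hτ : 4 ≤ τ) :
    theta2R (Real.pi * t) τ / theta3R (Real.pi * s) τ < 0.09 := by
  have hτ0 : 0 < τ := by linarith
  set q := exp (-π * τ / 4)
  have hq0 : 0 ≤ q := (exp_pos _).le
  have hq : q ≤ 0.044 := (exp_le_exp.mpr (by nlinarith [pi_pos])).trans exp_neg_pi_lt.le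
  have hq4 : q ^ 4 ≤ 0.001 := (pow_le_pow_left₀ hq0 hq 4).trans (by norm_num)
  have h2 : theta2R (π * t) τ ≤ 0.0885 :=
    calc theta2R (π * t) τ ≤ |theta2R (π * t) τ| := le_abs_self _
      _ ≤ 2 * q / (1 - q ^ 2) := abs_theta2R_le _ hτ0
      _ ≤ 0.0885 := by
        rw [div_le_iff₀ (by nlinarith)]
        nlinarith
  have h3 : 0.99 ≤ theta3R (π * s) τ :=
    calc (0.99 : ℝ) ≤ 2 - (1 + q ^ 4) / (1 - q ^ 4) := by
          have : (1 + q ^ 4) / (1 - q ^ 4) ≤ 1.01 := by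
            rw [div_le_iff₀ (by linarith)]
            linarith
          linarith
      _ ≤ theta3R (π * s) τ := two_sub_le_theta3R _ hτ0
  rw [div_lt_iff₀ (by linarith)]
  linarith
end

section
/- For every real α > 0 and every real t, |ϑ₂(πt, 2iα)/ϑ₃(πt, 2iα)| ≤ ϑ₂(0, 2iα)/ϑ₃(0, 2iα). -/
namespace ThetaMaxAux

noncomputable def rA0 (c m : ℝ) : ℝ := Real.exp (-(c * (m + 1 / 2) ^ 2))

noncomputable def rA (c z m : ℝ) : ℝ := rA0 c m * Real.cos (2 * z * (m + 1 / 2))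

noncomputable def rB0 (c x : ℝ) : ℝ := Real.exp (-(c * x ^ 2))

noncomputable def rB (c z x : ℝ) : ℝ := rB0 c x * Real.cos (2 * x * z)

noncomputable def rU (c z ε x : ℝ) : ℝ :=
  Real.exp (-(2 * c * (x + (ε / 2 + 1 / 4)) ^ 2)) * Real.sin ((2 * x + ε + 1 / 2) * z)

noncomputable def rV (c z ε x : ℝ) : ℝ :=
  Real.exp (-(2 * c * (x + (ε / 2 + 1 / 4)) ^ 2)) * Real.cos ((2 * x + ε + 1 / 2) * z)

/-! ### Pointwise product-to-sum identities -/

lemma pt_sub_r (c z k l ε : ℝ) :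
    rA0 c (k + l + ε) * rB c z (k - l) - rA c z (k + l + ε) * rB0 c (k - l)
      = 2 * (rU c z ε k * rU c z ε l) := by
  simp only [rA0, rA, rB0, rB, rU]
  have hE : Real.exp (-(c * (k + l + ε + 1 / 2) ^ 2)) * Real.exp (-(c * (k - l) ^ 2))
      = Real.exp (-(2 * c * (k + (ε / 2 + 1 / 4)) ^ 2))
        * Real.exp (-(2 * c * (l + (ε / 2 + 1 / 4)) ^ 2)) := by
    rw [← Real.exp_add, ← Real.exp_add]; congr 1; ring
  have hT : Real.cos (2 * (k - l) * z) - Real.cos (2 * z * (k + l + ε + 1 / 2))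
      = 2 * (Real.sin ((2 * k + ε + 1 / 2) * z) * Real.sin ((2 * l + ε + 1 / 2) * z)) := by
    rw [Real.cos_sub_cos,
      show (2 * (k - l) * z + 2 * z * (k + l + ε + 1 / 2)) / 2 = (2 * k + ε + 1 / 2) * z by ring,
      show (2 * (k - l) * z - 2 * z * (k + l + ε + 1 / 2)) / 2 = -((2 * l + ε + 1 / 2) * z) by ring,
      Real.sin_neg]
    ring
  linear_combination (Real.exp (-(c * (k + l + ε + 1 / 2) ^ 2))
      * Real.exp (-(c * (k - l) ^ 2))) * hT
    + (2 * (Real.sin ((2 * k + ε + 1 / 2) * z) * Real.sin ((2 * l + ε + 1 / 2) * z))) * hE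

lemma pt_add_r (c z k l ε : ℝ) :
    rA0 c (k + l + ε) * rB c z (k - l) + rA c z (k + l + ε) * rB0 c (k - l)
      = 2 * (rV c z ε k * rV c z ε l) := by
  simp only [rA0, rA, rB0, rB, rV]
  have hE : Real.exp (-(c * (k + l + ε + 1 / 2) ^ 2)) * Real.exp (-(c * (k - l) ^ 2))
      = Real.exp (-(2 * c * (k + (ε / 2 + 1 / 4)) ^ 2))
        * Real.exp (-(2 * c * (l + (ε / 2 + 1 / 4)) ^ 2)) := by
    rw [← Real.exp_add, ← Real.exp_add]; congr 1; ring
  have hT : Real.cos (2 * (k - l) * z) + Real.cos (2 * z * (k + l + ε + 1 / 2))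
      = 2 * (Real.cos ((2 * k + ε + 1 / 2) * z) * Real.cos ((2 * l + ε + 1 / 2) * z)) := by
    rw [Real.cos_add_cos,
      show (2 * (k - l) * z + 2 * z * (k + l + ε + 1 / 2)) / 2 = (2 * k + ε + 1 / 2) * z by ring,
      show (2 * (k - l) * z - 2 * z * (k + l + ε + 1 / 2)) / 2 = -((2 * l + ε + 1 / 2) * z) by ring,
      Real.cos_neg]
    ring
  linear_combination (Real.exp (-(c * (k + l + ε + 1 / 2) ^ 2))
      * Real.exp (-(c * (k - l) ^ 2))) * hT
    + (2 * (Real.cos ((2 * k + ε + 1 / 2) * z) * Real.cos ((2 * l + ε + 1 / 2) * z))) * hE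

/-! ### Summability -/

lemma summable_gauss {c : ℝ} (hc : 0 < c) (e : ℝ) (he0 : 0 ≤ e) (he1 : e ≤ 1) :
    Summable fun n : ℤ => Real.exp (-(c * ((n : ℝ) + e) ^ 2)) := by
  have hgeo : Summable fun n : ℕ => Real.exp c * Real.exp (-c) ^ n :=
    (summable_geometric_of_lt_one (Real.exp_nonneg _)
      (by rw [Real.exp_lt_one_iff]; linarith)).mul_left _
  have key : ∀ (x : ℝ) (n : ℕ), (n : ℝ) - 1 ≤ x ^ 2 →
      Real.exp (-(c * x ^ 2)) ≤ Real.exp c * Real.exp (-c) ^ n := by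
    intro x n h
    rw [← Real.exp_nat_mul, ← Real.exp_add]
    apply Real.exp_le_exp.mpr
    nlinarith [mul_le_mul_of_nonneg_left h hc.le]
  apply Summable.of_nat_of_neg_add_one
  · apply Summable.of_nonneg_of_le (fun n => (Real.exp_pos _).le) _ hgeo
    intro n
    apply key
    push_cast
    nlinarith [sq_nonneg ((n : ℝ) - 1/2), sq_nonneg e,
      mul_nonneg (Nat.cast_nonneg (α := ℝ) n) he0]
  · apply Summable.of_nonneg_of_le (fun n => (Real.exp_pos _).le) _ hgeo
    intro n
    apply key
    push_cast
    nlinarith [sq_nonneg ((n : ℝ) - 1/2), sq_nonneg (1 - e),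
      mul_nonneg (Nat.cast_nonneg (α := ℝ) n) (by linarith : (0:ℝ) ≤ 1 - e)]

lemma summable_norm_gauss_mul {c : ℝ} (hc : 0 < c) (e : ℝ) (he0 : 0 ≤ e) (he1 : e ≤ 1)
    (w : ℤ → ℝ) (hw : ∀ n, |w n| ≤ 1) :
    Summable fun n : ℤ => ‖Real.exp (-(c * ((n : ℝ) + e) ^ 2)) * w n‖ := by
  apply Summable.of_nonneg_of_le (fun n => norm_nonneg _) _ (summable_gauss hc e he0 he1)
  intro n
  rw [Real.norm_eq_abs, abs_mul, Real.abs_exp]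
  exact mul_le_of_le_one_right (Real.exp_pos _).le (hw n)

variable {c : ℝ} (z : ℝ)

lemma nsA (hc : 0 < c) : Summable fun j : ℤ => ‖rA c z (j : ℝ)‖ := by
  simpa only [rA, rA0] using
    summable_norm_gauss_mul hc (1/2) (by norm_num) (by norm_num)
      (fun j : ℤ => Real.cos (2 * z * ((j : ℝ) + 1 / 2))) (fun j => Real.abs_cos_le_one _)

lemma nsA0 (hc : 0 < c) : Summable fun j : ℤ => ‖rA0 c (j : ℝ)‖ := by
  simpa only [rA0, mul_one] using
    summable_norm_gauss_mul hc (1/2) (by norm_num) (by norm_num)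
      (fun _ : ℤ => (1 : ℝ)) (fun j => by norm_num)

lemma nsB (hc : 0 < c) : Summable fun n : ℤ => ‖rB c z (n : ℝ)‖ := by
  have := summable_norm_gauss_mul hc 0 le_rfl zero_le_one
      (fun n : ℤ => Real.cos (2 * (n : ℝ) * z)) (fun n => Real.abs_cos_le_one _)
  apply this.congr
  intro n
  simp only [rB, rB0, add_zero]

lemma nsB0 (hc : 0 < c) : Summable fun n : ℤ => ‖rB0 c (n : ℝ)‖ := by
  have := summable_norm_gauss_mul hc 0 le_rfl zero_le_one
      (fun _ : ℤ => (1 : ℝ)) (fun n => by norm_num)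
  apply this.congr
  intro n
  simp only [rB0, add_zero, mul_one]

lemma nsU (hc : 0 < c) (ε : ℝ) (hε0 : 0 ≤ ε) (hε1 : ε ≤ 1) :
    Summable fun k : ℤ => ‖rU c z ε (k : ℝ)‖ := by
  simpa only [rU] using
    summable_norm_gauss_mul (by linarith : (0:ℝ) < 2 * c) (ε / 2 + 1 / 4)
      (by linarith) (by linarith)
      (fun k : ℤ => Real.sin ((2 * (k : ℝ) + ε + 1 / 2) * z)) (fun k => Real.abs_sin_le_one _)

lemma nsV (hc : 0 < c) (ε : ℝ) (hε0 : 0 ≤ ε) (hε1 : ε ≤ 1) :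
    Summable fun k : ℤ => ‖rV c z ε (k : ℝ)‖ := by
  simpa only [rV] using
    summable_norm_gauss_mul (by linarith : (0:ℝ) < 2 * c) (ε / 2 + 1 / 4)
      (by linarith) (by linarith)
      (fun k : ℤ => Real.cos ((2 * (k : ℝ) + ε + 1 / 2) * z)) (fun k => Real.abs_cos_le_one _)

/-! ### Parity decomposition of sums over ℤ × ℤ -/

lemma hasSum_parity {F G0 G1 : ℤ × ℤ → ℝ} {a0 a1 : ℝ}
    (hG0 : HasSum G0 a0) (hG1 : HasSum G1 a1)
    (h0 : ∀ k l : ℤ, F (k + l, k - l) = G0 (k, l))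
    (h1 : ∀ k l : ℤ, F (k + l + 1, k - l) = G1 (k, l)) :
    HasSum F (a0 + a1) := by
  classical
  set F0 : ℤ × ℤ → ℝ := fun p => if (p.1 + p.2) % 2 = 0 then F p else 0 with hF0def
  set F1 : ℤ × ℤ → ℝ := fun p => if (p.1 + p.2) % 2 = 0 then 0 else F p with hF1def
  have e0inj : Function.Injective (fun q : ℤ × ℤ => ((q.1 + q.2, q.1 - q.2) : ℤ × ℤ)) := by
    rintro ⟨a, b⟩ ⟨a', b'⟩ h
    simp only [Prod.mk.injEq] at h ⊢
    omega
  have e1inj : Function.Injective (fun q : ℤ × ℤ => ((q.1 + q.2 + 1, q.1 - q.2) : ℤ × ℤ)) := by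
    rintro ⟨a, b⟩ ⟨a', b'⟩ h
    simp only [Prod.mk.injEq] at h ⊢
    omega
  have hF0sum : HasSum F0 a0 := by
    refine (e0inj.hasSum_iff ?_).mp ?_
    · rintro ⟨p1, p2⟩ hp
      by_cases hm : (p1 + p2) % 2 = 0
      · exact absurd ⟨((p1 + p2) / 2, (p1 - p2) / 2), by
          simp only [Prod.mk.injEq]; omega⟩ hp
      · simpa only [hF0def] using if_neg hm
    · refine hG0.congr_fun fun q => ?_
      obtain ⟨k, l⟩ := q
      show (if ((k + l) + (k - l)) % 2 = 0 then F (k + l, k - l) else 0) = G0 (k, l)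
      rw [if_pos (by omega)]
      exact h0 k l
  have hF1sum : HasSum F1 a1 := by
    refine (e1inj.hasSum_iff ?_).mp ?_
    · rintro ⟨p1, p2⟩ hp
      by_cases hm : (p1 + p2) % 2 = 0
      · simpa only [hF1def] using if_pos hm
      · exact absurd ⟨((p1 + p2 - 1) / 2, (p1 - p2 - 1) / 2), by
          simp only [Prod.mk.injEq]; omega⟩ hp
    · refine hG1.congr_fun fun q => ?_
      obtain ⟨k, l⟩ := q
      show (if ((k + l + 1) + (k - l)) % 2 = 0 then 0 else F (k + l + 1, k - l)) = G1 (k, l)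
      rw [if_neg (by omega)]
      exact h1 k l
  refine (hF0sum.add hF1sum).congr_fun fun p => ?_
  by_cases hm : (p.1 + p.2) % 2 = 0
  · simp only [hF0def, hF1def, if_pos hm, add_zero]
  · simp only [hF0def, hF1def, if_neg hm, zero_add]

/-! ### Main inequality at the level of raw sums -/

set_option maxHeartbeats 1000000 in
lemma hasSum_P (c z : ℝ) (hc : 0 < c) :
    HasSum (fun p : ℤ × ℤ => rA0 c (p.1 : ℝ) * rB c z (p.2 : ℝ))
      ((∑' j : ℤ, rA0 c (j : ℝ)) * (∑' n : ℤ, rB c z (n : ℝ))) :=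
  HasSum.mul (f := fun j : ℤ => rA0 c (j : ℝ)) (g := fun n : ℤ => rB c z (n : ℝ))
    (nsA0 hc).of_norm.hasSum (nsB z hc).of_norm.hasSum
    (summable_mul_of_summable_norm (R := ℝ) (f := fun j : ℤ => rA0 c (j : ℝ))
      (g := fun n : ℤ => rB c z (n : ℝ)) (nsA0 hc) (nsB z hc))

set_option maxHeartbeats 1000000 in
lemma hasSum_Q (c z : ℝ) (hc : 0 < c) :
    HasSum (fun p : ℤ × ℤ => rA c z (p.1 : ℝ) * rB0 c (p.2 : ℝ))
      ((∑' j : ℤ, rA c z (j : ℝ)) * (∑' n : ℤ, rB0 c (n : ℝ))) :=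
  HasSum.mul (f := fun j : ℤ => rA c z (j : ℝ)) (g := fun n : ℤ => rB0 c (n : ℝ))
    (nsA z hc).of_norm.hasSum (nsB0 hc).of_norm.hasSum
    (summable_mul_of_summable_norm (R := ℝ) (f := fun j : ℤ => rA c z (j : ℝ))
      (g := fun n : ℤ => rB0 c (n : ℝ)) (nsA z hc) (nsB0 hc))

set_option maxHeartbeats 1000000 in
lemma hasSum_Usq (c z : ℝ) (hc : 0 < c) (ε : ℝ) (hε0 : 0 ≤ ε) (hε1 : ε ≤ 1) :
    HasSum (fun q : ℤ × ℤ => 2 * (rU c z ε (q.1 : ℝ) * rU c z ε (q.2 : ℝ)))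
      (2 * ((∑' k : ℤ, rU c z ε (k : ℝ)) * (∑' k : ℤ, rU c z ε (k : ℝ)))) :=
  (HasSum.mul (f := fun k : ℤ => rU c z ε (k : ℝ)) (g := fun k : ℤ => rU c z ε (k : ℝ))
    (nsU z hc ε hε0 hε1).of_norm.hasSum (nsU z hc ε hε0 hε1).of_norm.hasSum
    (summable_mul_of_summable_norm (R := ℝ) (f := fun k : ℤ => rU c z ε (k : ℝ))
      (g := fun k : ℤ => rU c z ε (k : ℝ))
      (nsU z hc ε hε0 hε1) (nsU z hc ε hε0 hε1))).mul_left 2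

set_option maxHeartbeats 1000000 in
lemma hasSum_Vsq (c z : ℝ) (hc : 0 < c) (ε : ℝ) (hε0 : 0 ≤ ε) (hε1 : ε ≤ 1) :
    HasSum (fun q : ℤ × ℤ => 2 * (rV c z ε (q.1 : ℝ) * rV c z ε (q.2 : ℝ)))
      (2 * ((∑' k : ℤ, rV c z ε (k : ℝ)) * (∑' k : ℤ, rV c z ε (k : ℝ)))) :=
  (HasSum.mul (f := fun k : ℤ => rV c z ε (k : ℝ)) (g := fun k : ℤ => rV c z ε (k : ℝ))
    (nsV z hc ε hε0 hε1).of_norm.hasSum (nsV z hc ε hε0 hε1).of_norm.hasSum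
    (summable_mul_of_summable_norm (R := ℝ) (f := fun k : ℤ => rV c z ε (k : ℝ))
      (g := fun k : ℤ => rV c z ε (k : ℝ))
      (nsV z hc ε hε0 hε1) (nsV z hc ε hε0 hε1))).mul_left 2

set_option maxHeartbeats 1000000 in
lemma eq_sub (c z : ℝ) (hc : 0 < c) :
    (∑' j : ℤ, rA0 c (j : ℝ)) * (∑' n : ℤ, rB c z (n : ℝ))
        - (∑' j : ℤ, rA c z (j : ℝ)) * (∑' n : ℤ, rB0 c (n : ℝ))
      = 2 * ((∑' k : ℤ, rU c z 0 (k : ℝ)) * (∑' k : ℤ, rU c z 0 (k : ℝ)))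
        + 2 * ((∑' k : ℤ, rU c z 1 (k : ℝ)) * (∑' k : ℤ, rU c z 1 (k : ℝ))) := by
  refine ((hasSum_P c z hc).sub (hasSum_Q c z hc)).unique ?_
  refine hasSum_parity (hasSum_Usq c z hc 0 le_rfl zero_le_one)
    (hasSum_Usq c z hc 1 zero_le_one le_rfl) ?_ ?_
  · intro k l
    show rA0 c ((k + l : ℤ) : ℝ) * rB c z ((k - l : ℤ) : ℝ)
        - rA c z ((k + l : ℤ) : ℝ) * rB0 c ((k - l : ℤ) : ℝ)
        = 2 * (rU c z 0 (k : ℝ) * rU c z 0 (l : ℝ))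
    push_cast
    simpa only [add_zero] using pt_sub_r c z (k : ℝ) (l : ℝ) 0
  · intro k l
    show rA0 c ((k + l + 1 : ℤ) : ℝ) * rB c z ((k - l : ℤ) : ℝ)
        - rA c z ((k + l + 1 : ℤ) : ℝ) * rB0 c ((k - l : ℤ) : ℝ)
        = 2 * (rU c z 1 (k : ℝ) * rU c z 1 (l : ℝ))
    push_cast
    exact pt_sub_r c z (k : ℝ) (l : ℝ) 1

set_option maxHeartbeats 1000000 in
lemma eq_add (c z : ℝ) (hc : 0 < c) :
    (∑' j : ℤ, rA0 c (j : ℝ)) * (∑' n : ℤ, rB c z (n : ℝ))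
        + (∑' j : ℤ, rA c z (j : ℝ)) * (∑' n : ℤ, rB0 c (n : ℝ))
      = 2 * ((∑' k : ℤ, rV c z 0 (k : ℝ)) * (∑' k : ℤ, rV c z 0 (k : ℝ)))
        + 2 * ((∑' k : ℤ, rV c z 1 (k : ℝ)) * (∑' k : ℤ, rV c z 1 (k : ℝ))) := by
  refine ((hasSum_P c z hc).add (hasSum_Q c z hc)).unique ?_
  refine hasSum_parity (hasSum_Vsq c z hc 0 le_rfl zero_le_one)
    (hasSum_Vsq c z hc 1 zero_le_one le_rfl) ?_ ?_
  · intro k l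
    show rA0 c ((k + l : ℤ) : ℝ) * rB c z ((k - l : ℤ) : ℝ)
        + rA c z ((k + l : ℤ) : ℝ) * rB0 c ((k - l : ℤ) : ℝ)
        = 2 * (rV c z 0 (k : ℝ) * rV c z 0 (l : ℝ))
    push_cast
    simpa only [add_zero] using pt_add_r c z (k : ℝ) (l : ℝ) 0
  · intro k l
    show rA0 c ((k + l + 1 : ℤ) : ℝ) * rB c z ((k - l : ℤ) : ℝ)
        + rA c z ((k + l + 1 : ℤ) : ℝ) * rB0 c ((k - l : ℤ) : ℝ)
        = 2 * (rV c z 1 (k : ℝ) * rV c z 1 (l : ℝ))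
    push_cast
    exact pt_add_r c z (k : ℝ) (l : ℝ) 1

set_option maxHeartbeats 1000000 in
lemma main_c (c z : ℝ) (hc : 0 < c) :
    |∑' j : ℤ, rA c z (j : ℝ)| * (∑' n : ℤ, rB0 c (n : ℝ))
      ≤ (∑' j : ℤ, rA0 c (j : ℝ)) * (∑' n : ℤ, rB c z (n : ℝ)) := by
  have eq1 := eq_sub c z hc
  have eq2 := eq_add c z hc
  have hT30 : 0 ≤ ∑' n : ℤ, rB0 c (n : ℝ) := tsum_nonneg fun n => (Real.exp_pos _).le
  have hle : (∑' j : ℤ, rA c z (j : ℝ)) * (∑' n : ℤ, rB0 c (n : ℝ))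
      ≤ (∑' j : ℤ, rA0 c (j : ℝ)) * (∑' n : ℤ, rB c z (n : ℝ)) := by
    nlinarith [mul_self_nonneg (∑' k : ℤ, rU c z 0 (k : ℝ)),
      mul_self_nonneg (∑' k : ℤ, rU c z 1 (k : ℝ))]
  have hge : -((∑' j : ℤ, rA0 c (j : ℝ)) * (∑' n : ℤ, rB c z (n : ℝ)))
      ≤ (∑' j : ℤ, rA c z (j : ℝ)) * (∑' n : ℤ, rB0 c (n : ℝ)) := by
    nlinarith [mul_self_nonneg (∑' k : ℤ, rV c z 0 (k : ℝ)),
      mul_self_nonneg (∑' k : ℤ, rV c z 1 (k : ℝ))]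
  calc |∑' j : ℤ, rA c z (j : ℝ)| * (∑' n : ℤ, rB0 c (n : ℝ))
      = |(∑' j : ℤ, rA c z (j : ℝ)) * (∑' n : ℤ, rB0 c (n : ℝ))| := by
        rw [abs_mul, abs_of_nonneg hT30]
    _ ≤ (∑' j : ℤ, rA0 c (j : ℝ)) * (∑' n : ℤ, rB c z (n : ℝ)) := abs_le.mpr ⟨hge, hle⟩

/-! ### Relating the raw sums to the theta functions -/

lemma theta2R_eq (z τ : ℝ) : theta2R z τ = ∑' j : ℤ, rA (Real.pi * τ) z (j : ℝ) := by
  unfold theta2R rA rA0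
  simp only [neg_mul]

lemma theta2R_zero_eq (τ : ℝ) : theta2R 0 τ = ∑' j : ℤ, rA0 (Real.pi * τ) (j : ℝ) := by
  unfold theta2R rA0
  simp only [neg_mul, mul_zero, zero_mul, Real.cos_zero, mul_one]

lemma theta3R_eq (z τ : ℝ) : theta3R z τ = ∑' n : ℤ, rB (Real.pi * τ) z (n : ℝ) := by
  unfold theta3R rB rB0
  simp only [neg_mul]

lemma theta3R_zero_eq (τ : ℝ) : theta3R 0 τ = ∑' n : ℤ, rB0 (Real.pi * τ) (n : ℝ) := by
  unfold theta3R rB0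
  simp only [neg_mul, mul_zero, Real.cos_zero, mul_one]

lemma t20_pos {c : ℝ} (hc : 0 < c) : 0 < ∑' j : ℤ, rA0 c (j : ℝ) :=
  Summable.tsum_pos (nsA0 hc).of_norm (fun j => (Real.exp_pos _).le) 0 (Real.exp_pos _)

lemma t30_pos {c : ℝ} (hc : 0 < c) : 0 < ∑' n : ℤ, rB0 c (n : ℝ) :=
  Summable.tsum_pos (nsB0 hc).of_norm (fun n => (Real.exp_pos _).le) 0 (Real.exp_pos _)

end ThetaMaxAux

open ThetaMaxAux

theorem theta2_div_theta3_max_at_zero (α : ℝ) (hα : 0 < α) (t : ℝ) :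
    |theta2R (Real.pi * t) (2 * α) / theta3R (Real.pi * t) (2 * α)|
      ≤ theta2R 0 (2 * α) / theta3R 0 (2 * α) := by
  have hc : 0 < Real.pi * (2 * α) := mul_pos Real.pi_pos (by linarith)
  have key := main_c (Real.pi * (2 * α)) (Real.pi * t) hc
  rw [← theta2R_eq, ← theta2R_zero_eq, ← theta3R_eq, ← theta3R_zero_eq] at key
  have h20 : 0 < theta2R 0 (2 * α) := by rw [theta2R_zero_eq]; exact t20_pos hc
  have h30 : 0 < theta3R 0 (2 * α) := by rw [theta3R_zero_eq]; exact t30_pos hc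
  have hY : 0 ≤ theta3R (Real.pi * t) (2 * α) := by
    nlinarith [abs_nonneg (theta2R (Real.pi * t) (2 * α)),
      mul_nonneg (abs_nonneg (theta2R (Real.pi * t) (2 * α))) h30.le]
  rcases eq_or_lt_of_le hY with h | h
  · rw [← h, div_zero, abs_zero]
    positivity
  · rw [abs_div, abs_of_pos h, div_le_div_iff₀ h h30]
    exact key
end
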